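/- arXiv:2206.14023 — 4 statements merged into one kernel-verified Lean document; each statement's English description precedes it below -/
import Mathlib

section
/- For every positive integer k and every partition λ, the k-Petrie number pet_k(λ), defined as the determinant det[χ(0 ≤ λ_i - i + j < k)]_{i,j=1}^{ℓ(λ)}, lies in {-1, 0, 1}. -/
open scoped Classical

namespace Petrie

/-- An integer partition, encoded as a weakly decreasing, eventually zero
function `ℕ → ℕ` (0-indexed parts: `parts i` is the `(i+1)`-st part). -/
structure Partition where
  parts : ℕ → ℕ
  antitone : ∀ ⦃i j : ℕ⦄, i ≤ j → parts j ≤ parts i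
  fin_supp : ∃ N, ∀ i, N ≤ i → parts i = 0

/-- The size `|λ|` of a partition. -/
noncomputable def psize (l : Partition) : ℕ := ∑ᶠ i, l.parts i

/-- The number of (nonzero) parts of a partition. -/
noncomputable def length (l : Partition) : ℕ := sInf {i | l.parts i = 0}

/-- The partition whose parts are given by a weakly decreasing list `L`
(of its nonzero entries, possibly padded by zeros). -/
noncomputable def ofList (L : List ℕ) : Partition where
  parts := fun i => (L.drop i).foldr max 0
  antitone := by
    have step : ∀ (M : List ℕ) (i : ℕ),
        (M.drop (i+1)).foldr max 0 ≤ (M.drop i).foldr max 0 := by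
      intro M
      induction M with
      | nil => intro i; simp
      | cons a t ih =>
        intro i
        cases i with
        | zero =>
          simp only [List.drop_succ_cons, List.drop_zero, List.foldr_cons]; exact le_max_right a (t.foldr max 0)
        | succ n => simpa using ih n
    intro i j hij
    induction j, hij using Nat.le_induction with
    | base => exact le_rfl
    | succ n hn ih => exact (step L n).trans ih
  fin_supp := ⟨L.length, by intro i hi; simp [List.drop_eq_nil_of_le hi]⟩

/-- The conjugate (transpose) partition. -/
noncomputable def conj (l : Partition) : Partition where
  parts := fun i => sInf {n | l.parts n ≤ i}
  antitone := by
    intro i j hij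
    obtain ⟨N, hN⟩ := l.fin_supp
    refine csInf_le_csInf (OrderBot.bddBelow _) ⟨N, ?_⟩ ?_
    · simp [hN N le_rfl]
    · intro n hn
      exact le_trans hn hij
  fin_supp := by
    refine ⟨l.parts 0, fun i hi => ?_⟩
    exact Nat.sInf_eq_zero.mpr (Or.inl (le_trans (l.antitone (Nat.zero_le 0)) hi))

/-- The `k`-Petrie number `pet_k(λ) = det[χ(0 ≤ λ_i - i + j < k)]_{i,j=1}^{ℓ(λ)}`. -/
noncomputable def pet (k : ℕ) (l : Partition) : ℤ :=
  Matrix.det (Matrix.of fun i j : Fin (length l) =>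
    if (0:ℤ) ≤ (l.parts i : ℤ) - (i:ℕ) + (j:ℕ) ∧ (l.parts i : ℤ) - (i:ℕ) + (j:ℕ) < k
    then 1 else 0)

/-- The cells of the skew diagram `λ/μ` (rows and columns 0-indexed). -/
def cells (la mu : Partition) : Set (ℕ × ℕ) :=
  {c | mu.parts c.1 ≤ c.2 ∧ c.2 < la.parts c.1}

/-- Rookwise adjacency of two cells. -/
def Adj (c d : ℕ × ℕ) : Prop :=
  (c.1 = d.1 ∧ (c.2 + 1 = d.2 ∨ d.2 + 1 = c.2)) ∨
  (c.2 = d.2 ∧ (c.1 + 1 = d.1 ∨ d.1 + 1 = c.1))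

/-- `λ/μ` is a rim hook (border strip) of size `k`: `μ ⊆ λ`, the skew diagram
has `k` cells, is rookwise connected, and contains no 2×2 square. -/
def IsRimHook (la mu : Partition) (k : ℕ) : Prop :=
  (∀ i, mu.parts i ≤ la.parts i) ∧
  (∑ᶠ i, (la.parts i - mu.parts i)) = k ∧
  (∀ c ∈ cells la mu, ∀ d ∈ cells la mu,
    Relation.ReflTransGen (fun a b => a ∈ cells la mu ∧ b ∈ cells la mu ∧ Adj a b) c d) ∧
  ¬ ∃ i j : ℕ, (i, j) ∈ cells la mu ∧ (i+1, j) ∈ cells la mu ∧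
      (i, j+1) ∈ cells la mu ∧ (i+1, j+1) ∈ cells la mu

/-- The height of a skew shape `λ/μ`: one less than its number of rows. -/
noncomputable def height (la mu : Partition) : ℕ :=
  Set.ncard {i | mu.parts i < la.parts i} - 1

/-- The number of columns of the skew diagram `λ/μ`. -/
noncomputable def cols (la mu : Partition) : ℕ :=
  Set.ncard {j | ∃ i, (i, j) ∈ cells la mu}

/-- `c` is the `k`-core of `λ`: it is obtained from `λ` by successively removing
rim hooks of size `k`, and no further rim hook of size `k` can be removed. -/
def IsCore (k : ℕ) (la c : Partition) : Prop :=
  Relation.ReflTransGen (fun a b => IsRimHook a b k) la c ∧ ∀ b, ¬ IsRimHook c b k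

/-- Dominance order: `Dominates μ λ` means `λ ⊴ μ`. -/
def Dominates (mu la : Partition) : Prop :=
  ∀ r, ∑ i ∈ Finset.range r, la.parts i ≤ ∑ i ∈ Finset.range r, mu.parts i

/-! ### Symmetric functions, realized as formal power series in countably
many variables `x_0, x_1, x_2, …`. -/

/-- The ring of formal power series in the variables `x_i`, `i : ℕ`. -/
abbrev SymFn := MvPowerSeries ℕ ℤ

/-- The total degree of an exponent vector. -/
noncomputable def degree (d : ℕ →₀ ℕ) : ℕ := d.sum fun _ e => e

/-- The complete homogeneous symmetric function `h_m`. -/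
noncomputable def hfun (m : ℕ) : SymFn := fun d => if degree d = m then 1 else 0

/-- `h_n` for an integer index (`0` for negative `n`). -/
noncomputable def hz (n : ℤ) : SymFn := if 0 ≤ n then hfun n.toNat else 0

/-- The elementary symmetric function `e_m`. -/
noncomputable def esymmF (m : ℕ) : SymFn :=
  fun d => if degree d = m ∧ ∀ i, d i ≤ 1 then 1 else 0

/-- The power sum symmetric function `p_n = Σ_i x_i^n`. -/
noncomputable def psumF (n : ℕ) : SymFn :=
  fun d => if ∃ i, d = Finsupp.single i n then 1 else 0

/-- The Petrie symmetric function `G(k,m)`, i.e. the degree-`m` part of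
`Π_i (1 + x_i + x_i^2 + ⋯ + x_i^{k-1})`. -/
noncomputable def G (k m : ℕ) : SymFn :=
  fun d => if degree d = m ∧ ∀ i, d i < k then 1 else 0

/-- The monomial symmetric function `m_λ`. -/
noncomputable def msym (l : Partition) : SymFn :=
  fun d => if Multiset.map (fun i => d i) d.support.val =
      Multiset.map l.parts (Multiset.range (length l)) then 1 else 0

/-- The Schur function `s_λ`, via the Jacobi–Trudi determinant
`s_λ = det[h_{λ_i - i + j}]_{i,j=1}^{ℓ(λ)}`. -/
noncomputable def schur (l : Partition) : SymFn :=
  Matrix.det (Matrix.of fun i j : Fin (length l) =>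
    hz ((l.parts i : ℤ) - (i:ℕ) + (j:ℕ)))

/-- The representative in `{1, …, k}` of `x` modulo `k`. -/
noncomputable def resid (k : ℕ) (x : ℤ) : ℤ := if x % (k:ℤ) = 0 then (k:ℤ) else x % (k:ℤ)

/-- `β_i = λᶜ_i - i` (1-indexed `i`). -/
noncomputable def betaSeq (l : Partition) (i : ℕ) : ℤ := ((conj l).parts (i-1) : ℤ) - (i:ℤ)

/-- `γ_i ∈ {1, …, k}`, `γ_i ≡ λᶜ_i - i (mod k)` (1-indexed `i`). -/
noncomputable def gammaSeq (k : ℕ) (l : Partition) (i : ℕ) : ℤ := resid k (betaSeq l i)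

/-- The number of non-inversions of the sequence `γ_1, …, γ_{k-1}`. -/
noncomputable def ninv (k : ℕ) (g : ℕ → ℤ) : ℕ :=
  (((Finset.Icc 1 (k-1)) ×ˢ (Finset.Icc 1 (k-1))).filter
    (fun p => p.1 < p.2 ∧ g p.1 < g p.2)).card

/-! Each row of the Petrie matrix is the indicator of the window `i - λ_i ≤ j < i - λ_i + k`
of columns, so it is an interval matrix. The determinant of an interval matrix lies in
`{-1, 0, 1}`: among the rows covering the first column, subtract the one that ends first from
the others; the first column then has a single `1`, and expanding along it leaves an interval
matrix of smaller size. -/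

def intervalMatrix {n : ℕ} (a b : Fin n → ℤ) : Matrix (Fin n) (Fin n) ℤ :=
  Matrix.of fun i j => if a i ≤ ((j : ℕ) : ℤ) ∧ ((j : ℕ) : ℤ) < b i then 1 else 0

lemma neg_one_pow_mul_mem (t : ℕ) {d : ℤ} (hd : d ∈ ({-1, 0, 1} : Set ℤ)) :
    (-1) ^ t * d ∈ ({-1, 0, 1} : Set ℤ) := by
  rcases neg_one_pow_eq_or ℤ t with h | h <;>
    simp only [h, Set.mem_insert_iff, Set.mem_singleton_iff] at hd ⊢ <;> omega

section IntervalMatrix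

variable {n : ℕ}

lemma det_intervalMatrix_eq_zero {a b : Fin (n + 1) → ℤ} (h : ∀ i, ¬ (a i ≤ 0 ∧ 0 < b i)) :
    (intervalMatrix a b).det = 0 :=
  Matrix.det_eq_zero_of_column_eq_zero 0 fun i => by
    simpa [intervalMatrix] using h i

/-- Subtract row `i₀`, the first-ending row covering column `0`, from the other rows
covering column `0`. -/
lemma det_intervalMatrix_eq_det_clip {a b : Fin n → ℤ} {i₀ : Fin n} (hi₀ : a i₀ ≤ 0 ∧ 0 < b i₀)
    (hmin : ∀ i, a i ≤ 0 → 0 < b i → b i₀ ≤ b i) :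
    (intervalMatrix a b).det = (intervalMatrix
      (fun i => if (a i ≤ 0 ∧ 0 < b i) ∧ i ≠ i₀ then b i₀ else a i) b).det := by
  refine Matrix.det_eq_of_forall_row_eq_smul_add_const
    (fun i => if (a i ≤ 0 ∧ 0 < b i) ∧ i ≠ i₀ then 1 else 0) i₀ (by simp) fun i j => ?_
  have hj : (0 : ℤ) ≤ ((j : ℕ) : ℤ) := Int.natCast_nonneg _
  by_cases hc : (a i ≤ 0 ∧ 0 < b i) ∧ i ≠ i₀
  · have hb := hmin i hc.1.1 hc.1.2
    simp only [intervalMatrix, Matrix.of_apply, if_pos hc, ne_eq, not_true_eq_false,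
      and_false, if_false, one_mul]
    split_ifs <;> omega
  · simp [intervalMatrix, hc]

lemma intervalMatrix_submatrix_succAbove_succ (a b : Fin (n + 1) → ℤ) (i₀ : Fin (n + 1)) :
    (intervalMatrix a b).submatrix i₀.succAbove Fin.succ =
      intervalMatrix (fun i => a (i₀.succAbove i) - 1) (fun i => b (i₀.succAbove i) - 1) := by
  ext i j
  simp only [intervalMatrix, Matrix.submatrix_apply, Matrix.of_apply, Fin.val_succ]
  push_cast
  split_ifs <;> omega

lemma det_intervalMatrix_of_column_zero {a b : Fin (n + 1) → ℤ} {i₀ : Fin (n + 1)}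
    (hcol : ∀ i, a i ≤ 0 ∧ 0 < b i ↔ i = i₀) :
    (intervalMatrix a b).det = (-1) ^ (i₀ : ℕ) *
      (intervalMatrix (fun i => a (i₀.succAbove i) - 1) (fun i => b (i₀.succAbove i) - 1)).det := by
  have hentry : ∀ i, intervalMatrix a b i 0 = if i = i₀ then 1 else 0 := fun i => by
    simp [intervalMatrix, ← hcol i]
  rw [Matrix.det_succ_column_zero, Finset.sum_eq_single i₀
    (fun i _ hi => by rw [hentry, if_neg hi, mul_zero, zero_mul]) (by simp),
    hentry, if_pos rfl, mul_one, intervalMatrix_submatrix_succAbove_succ]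

theorem det_intervalMatrix_mem (a b : Fin n → ℤ) :
    (intervalMatrix a b).det ∈ ({-1, 0, 1} : Set ℤ) := by
  induction n with
  | zero => simp
  | succ n ih =>
    by_cases hcover : ∃ i, a i ≤ 0 ∧ 0 < b i
    · obtain ⟨i₀, hi₀, hmin⟩ := Finset.exists_min_image
        (Finset.univ.filter fun i => a i ≤ 0 ∧ 0 < b i) b
        (by simpa [Finset.Nonempty] using hcover)
      simp only [Finset.mem_filter, Finset.mem_univ, true_and] at hi₀ hmin
      have hcol : ∀ i, ((if (a i ≤ 0 ∧ 0 < b i) ∧ i ≠ i₀ then b i₀ else a i) ≤ 0 ∧ 0 < b i)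
          ↔ i = i₀ := fun i => by
        by_cases hi : i = i₀
        · simp [hi, hi₀]
        · by_cases hc : a i ≤ 0 ∧ 0 < b i
          · simp [hi, hc, hi₀.2]
          · simp [hi, hc]
      rw [det_intervalMatrix_eq_det_clip hi₀ fun i h₁ h₂ => hmin i ⟨h₁, h₂⟩,
        det_intervalMatrix_of_column_zero hcol]
      exact neg_one_pow_mul_mem _ (ih _ _)
    · rw [det_intervalMatrix_eq_zero fun i h => hcover ⟨i, h⟩]
      simp

end IntervalMatrix

lemma pet_eq_det_intervalMatrix (k : ℕ) (l : Partition) :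
    pet k l = (intervalMatrix (fun i : Fin (length l) => ((i : ℕ) : ℤ) - l.parts i)
      (fun i => ((i : ℕ) : ℤ) - l.parts i + k)).det := by
  unfold pet intervalMatrix
  congr 1
  ext i j
  simp only [Matrix.of_apply]
  split_ifs <;> omega

theorem petrie_number_mem_general (k : ℕ) (l : Partition) :
    pet k l ∈ ({-1, 0, 1} : Set ℤ) := by
  rw [pet_eq_det_intervalMatrix]
  exact det_intervalMatrix_mem _ _

/-- For every positive integer `k` and every partition `λ`,
the `k`-Petrie number lies in `{-1, 0, 1}`. -/
theorem petrie_number_mem (k : ℕ) (hk : 1 ≤ k) (l : Partition) :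
    pet k l ∈ ({-1, 0, 1} : Set ℤ) :=
  petrie_number_mem_general k l

end Petrie
end

section
/- Let k ≥ 1 and let λ be a partition with λ_1 < k. If the k-core of λ has more than one part, then pet_k(λ) = 0. -/
open scoped Classical

namespace Petrie

/-!
Encode a partition by its beads `β_i = λ_i - i` on the `k`-abacus. Removing a `k`-rim hook moves
one bead `k` positions down, so in the `k`-core every bead sits on a runner that is full from it
downwards. Since `λ_1 < k`, all beads of `λ` lie below `k`, and adding the rim hooks back cannot
move a bead off such a runner through `t ≥ 0`. The first two beads `0 ≤ β_1 < β_0 < k` of the core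
therefore give two distinct runners that are full in `λ`. Column `j` of the Petrie matrix marks the
beads in the window `[-j, k - j)`, which meets each full runner exactly once; so the rows on the
two runners have the same sum, and the determinant vanishes.
-/

theorem _root_.Int.ModEq.eq_of_le_of_lt_add {k a b w : ℤ} (h : a ≡ b [ZMOD k]) (ha : w ≤ a)
    (ha' : a < w + k) (hb : w ≤ b) (hb' : b < w + k) : a = b := by
  have hw := h.sub_right w
  unfold Int.ModEq at hw
  rw [Int.emod_eq_of_lt (by omega) (by omega), Int.emod_eq_of_lt (by omega) (by omega)] at hw
  omega

theorem _root_.Matrix.det_eq_zero_of_sum_rows_eq {n R : Type*} [Fintype n] [DecidableEq n]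
    [CommRing R] [IsDomain R] {M : Matrix n n R} {S₁ S₂ : Finset n} (hS : S₁ ≠ S₂)
    (h : ∀ j, ∑ i ∈ S₁, M i j = ∑ i ∈ S₂, M i j) : M.det = 0 := by
  rw [← Matrix.exists_vecMul_eq_zero_iff]
  refine ⟨fun i => (if i ∈ S₁ then 1 else 0) - (if i ∈ S₂ then 1 else 0), ?_, ?_⟩
  · obtain ⟨i, hi⟩ : ∃ i, ¬(i ∈ S₁ ↔ i ∈ S₂) := by
      by_contra! hall
      exact hS (Finset.ext hall)
    intro hv
    have := congrFun hv i
    by_cases h₁ : i ∈ S₁ <;> by_cases h₂ : i ∈ S₂ <;> simp_all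
  · funext j
    simp [Matrix.vecMul, dotProduct, sub_mul, Finset.sum_sub_distrib, h j]

lemma parts_eq_zero_of_length_le (p : Partition) {i : ℕ} (hi : length p ≤ i) :
    p.parts i = 0 := by
  obtain ⟨N, hN⟩ := p.fin_supp
  have h0 : p.parts (length p) = 0 := Nat.sInf_mem (s := {i | p.parts i = 0}) ⟨N, hN N le_rfl⟩
  exact Nat.le_zero.mp (h0 ▸ p.antitone hi)

lemma parts_ne_zero_of_lt_length (p : Partition) {i : ℕ} (hi : i < length p) :
    p.parts i ≠ 0 :=
  Nat.notMem_of_lt_sInf (s := {i | p.parts i = 0}) hi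

def beta (p : Partition) (i : ℕ) : ℤ := (p.parts i : ℤ) - i

lemma beta_strictAnti (p : Partition) : StrictAnti (beta p) := by
  intro i j hij
  have : p.parts j ≤ p.parts i := p.antitone hij.le
  simp only [beta]
  omega

lemma beta_le_parts_zero (p : Partition) (i : ℕ) : beta p i ≤ p.parts 0 := by
  have : p.parts i ≤ p.parts 0 := p.antitone (Nat.zero_le i)
  simp only [beta]
  omega

lemma lt_length_of_neg_length_lt_beta {p : Partition} {i : ℕ}
    (h : -(length p : ℤ) < beta p i) : i < length p := by
  by_contra! hi
  have := parts_eq_zero_of_length_le p hi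
  simp only [beta] at h
  omega

def RunnerFull (k : ℕ) (p : Partition) (t : ℤ) : Prop :=
  ∀ m : ℕ, ∃ i, beta p i = t - m * k

noncomputable def petMatrix (k : ℕ) (l : Partition) :
    Matrix (Fin (length l)) (Fin (length l)) ℤ :=
  Matrix.of fun i j => if 0 ≤ beta l i + j ∧ beta l i + j < k then 1 else 0

lemma pet_eq_det_petMatrix (k : ℕ) (l : Partition) : pet k l = (petMatrix k l).det := rfl

/-- Column `j` marks the beads in the window `[-j, k - j)`, which contains exactly one position of
each runner. -/
lemma sum_petMatrix_rows_of_runnerFull {k : ℕ} {l : Partition} (hl : l.parts 0 < k) {t : ℤ}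
    (ht : 0 ≤ t) (hfull : RunnerFull k l t) (j : Fin (length l)) :
    ∑ i ∈ Finset.univ.filter (fun i : Fin (length l) => beta l i ≡ t [ZMOD k]),
      petMatrix k l i j = 1 := by
  obtain ⟨i₀, hi₀⟩ := hfull ((t + j) / k).toNat
  have hk : (0 : ℤ) < k := by omega
  have hwin : -(j : ℤ) ≤ beta l i₀ ∧ beta l i₀ < -j + k := by
    rw [hi₀, Int.toNat_of_nonneg (Int.ediv_nonneg (by omega) hk.le)]
    have := Int.mul_ediv_add_emod (t + j) k
    have := Int.emod_nonneg (t + j) hk.ne'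
    have := Int.emod_lt_of_pos (t + j) hk
    constructor <;> linarith
  have hi₀ℓ : i₀ < length l := lt_length_of_neg_length_lt_beta (by have := j.2; omega)
  have hmod : beta l i₀ ≡ t [ZMOD k] :=
    Int.modEq_iff_dvd.mpr ⟨((t + j) / k).toNat, by rw [hi₀]; ring⟩
  rw [Finset.sum_eq_single_of_mem ⟨i₀, hi₀ℓ⟩ (by simpa using hmod)]
  · exact if_pos (by dsimp only; omega)
  · intro i hi hne
    have hi : beta l i ≡ t [ZMOD k] := (Finset.mem_filter.mp hi).2
    simp only [petMatrix, Matrix.of_apply, ite_eq_right_iff, one_ne_zero, imp_false]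
    intro hiwin
    exact hne (Fin.ext ((beta_strictAnti l).injective
      ((hi.trans hmod.symm).eq_of_le_of_lt_add (by omega) (by omega) hwin.1 hwin.2)))

lemma pet_eq_zero_of_runnerFull {k : ℕ} {l : Partition} (hl : l.parts 0 < k) {t₁ t₂ : ℤ}
    (ht₂ : 0 ≤ t₂) (ht : t₂ < t₁) (hfull₁ : RunnerFull k l t₁)
    (hfull₂ : RunnerFull k l t₂) : pet k l = 0 := by
  obtain ⟨i₁, hi₁⟩ := hfull₁ 0
  rw [Nat.cast_zero, zero_mul, sub_zero] at hi₁
  have ht₁ : t₁ < k := hi₁ ▸ (beta_le_parts_zero l i₁).trans_lt (by exact_mod_cast hl)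
  have hne : ¬ t₁ ≡ t₂ [ZMOD k] := fun h =>
    ht.ne' (h.eq_of_le_of_lt_add (w := 0) (by omega) (by omega) ht₂ (by omega))
  have hi₁ℓ : i₁ < length l := lt_length_of_neg_length_lt_beta (by omega)
  rw [pet_eq_det_petMatrix]
  refine Matrix.det_eq_zero_of_sum_rows_eq
    (S₁ := Finset.univ.filter (beta l · ≡ t₁ [ZMOD k]))
    (S₂ := Finset.univ.filter (beta l · ≡ t₂ [ZMOD k])) (fun hS => hne ?_) fun j => by
      rw [sum_petMatrix_rows_of_runnerFull hl (by omega) hfull₁,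
        sum_petMatrix_rows_of_runnerFull hl ht₂ hfull₂]
  have hmem := Finset.ext_iff.mp hS ⟨i₁, hi₁ℓ⟩
  simp only [Finset.mem_filter, Finset.mem_univ, true_and] at hmem
  have hmod₁ : beta l i₁ ≡ t₁ [ZMOD k] := by rw [hi₁]
  exact hmod₁.symm.trans (hmem.mp hmod₁)

@[simp]
lemma mem_cells {la mu : Partition} {i j : ℕ} :
    (i, j) ∈ cells la mu ↔ mu.parts i ≤ j ∧ j < la.parts i :=
  Iff.rfl

lemma adj_symm {a b : ℕ × ℕ} (h : Adj a b) : Adj b a := by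
  unfold Adj at *
  omega

lemma reflTransGen_adj_symm {S : Set (ℕ × ℕ)} {a b : ℕ × ℕ}
    (h : Relation.ReflTransGen (fun a b => a ∈ S ∧ b ∈ S ∧ Adj a b) a b) :
    Relation.ReflTransGen (fun a b => a ∈ S ∧ b ∈ S ∧ Adj a b) b a :=
  have : Std.Symm (fun a b => a ∈ S ∧ b ∈ S ∧ Adj a b) :=
    ⟨fun _ _ ⟨ha, hb, hab⟩ => ⟨hb, ha, adj_symm hab⟩⟩
  Std.Symm.symm _ _ h

lemma exists_vertical_of_reflTransGen {S : Set (ℕ × ℕ)} {i : ℕ} {c d : ℕ × ℕ}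
    (h : Relation.ReflTransGen (fun a b => a ∈ S ∧ b ∈ S ∧ Adj a b) c d)
    (hc : c.1 ≤ i) (hd : i < d.1) : ∃ j, (i, j) ∈ S ∧ (i + 1, j) ∈ S := by
  induction h with
  | refl => omega
  | @tail a b _ hab ih =>
    obtain ⟨ha, hb, hadj⟩ := hab
    by_cases hai : i < a.1
    · exact ih hai
    · have hrows : a.1 = i ∧ b.1 = i + 1 ∧ a.2 = b.2 := by
        unfold Adj at hadj
        omega
      refine ⟨a.2, ?_, ?_⟩
      · rw [← hrows.1]
        exact ha
      · rw [hrows.2.2, ← hrows.2.1]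
        exact hb

lemma reflTransGen_of_mem_cells_row {la mu : Partition} {i j j' : ℕ}
    (h : (i, j) ∈ cells la mu) (h' : (i, j') ∈ cells la mu) :
    Relation.ReflTransGen (fun a b => a ∈ cells la mu ∧ b ∈ cells la mu ∧ Adj a b)
      (i, j) (i, j') := by
  wlog hjj : j ≤ j' generalizing j j'
  · exact reflTransGen_adj_symm (this h' h (by omega))
  induction j', hjj using Nat.le_induction with
  | base => rfl
  | succ n hjn ih =>
    have hn : (i, n) ∈ cells la mu := by
      rw [mem_cells] at h h' ⊢
      omega
    exact (ih hn).tail ⟨hn, h', Or.inl ⟨rfl, Or.inl rfl⟩⟩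

/-- `la / mu` occupies exactly the rows `r, …, s`, and each of these rows overlaps the next one in
exactly one column. -/
structure IsBorderStrip (la mu : Partition) (r s : ℕ) : Prop where
  le : r ≤ s
  parts_eq : ∀ i, i < r ∨ s < i → mu.parts i = la.parts i
  parts_succ_eq : ∀ i, r ≤ i → i < s → la.parts (i + 1) = mu.parts i + 1
  parts_lt : mu.parts s < la.parts s

namespace IsBorderStrip

variable {la mu : Partition} {r s : ℕ}

lemma parts_lt_of_le (h : IsBorderStrip la mu r s) {i : ℕ} (hri : r ≤ i) (his : i ≤ s) :
    mu.parts i < la.parts i := by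
  rcases his.lt_or_eq with his | rfl
  · have := h.parts_succ_eq i hri his
    have := la.antitone (by omega : i ≤ i + 1)
    omega
  · exact h.parts_lt

lemma parts_le (h : IsBorderStrip la mu r s) (i : ℕ) : mu.parts i ≤ la.parts i := by
  by_cases hi : r ≤ i ∧ i ≤ s
  · exact (h.parts_lt_of_le hi.1 hi.2).le
  · exact (h.parts_eq i (by omega)).le

lemma mem_rows (h : IsBorderStrip la mu r s) {p : ℕ × ℕ} (hp : p ∈ cells la mu) :
    r ≤ p.1 ∧ p.1 ≤ s := by
  by_contra hout
  have := h.parts_eq p.1 (by omega)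
  have := hp.1.trans_lt hp.2
  omega

lemma not_exists_square (h : IsBorderStrip la mu r s) :
    ¬ ∃ i j : ℕ, (i, j) ∈ cells la mu ∧ (i + 1, j) ∈ cells la mu ∧
      (i, j + 1) ∈ cells la mu ∧ (i + 1, j + 1) ∈ cells la mu := by
  rintro ⟨i, j, hij, hi₁j, -, hi₁j₁⟩
  have hri : r ≤ i := (h.mem_rows hij).1
  have his : i + 1 ≤ s := (h.mem_rows hi₁j).2
  have := h.parts_succ_eq i hri (by omega)
  rw [mem_cells] at hij hi₁j₁
  omega

lemma reflTransGen_cells (h : IsBorderStrip la mu r s) {p q : ℕ × ℕ} (hp : p ∈ cells la mu)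
    (hq : q ∈ cells la mu) :
    Relation.ReflTransGen (fun a b => a ∈ cells la mu ∧ b ∈ cells la mu ∧ Adj a b) p q := by
  have hlast : (s, mu.parts s) ∈ cells la mu := ⟨le_rfl, h.parts_lt⟩
  -- walk left along the row to column `mu_i`, step down, and repeat until row `s`
  have hdown : ∀ d i j, s - i = d → (i, j) ∈ cells la mu →
      Relation.ReflTransGen (fun a b => a ∈ cells la mu ∧ b ∈ cells la mu ∧ Adj a b)
        (i, j) (s, mu.parts s) := by
    intro d
    induction d with
    | zero =>
      intro i j hd hij
      obtain rfl : i = s := by have := (h.mem_rows hij).2; omega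
      exact reflTransGen_of_mem_cells_row hij hlast
    | succ d ih =>
      intro i j hd hij
      have hri := (h.mem_rows hij).1
      have hsucc := h.parts_succ_eq i hri (by omega)
      have hcorner : (i, mu.parts i) ∈ cells la mu :=
        ⟨le_rfl, h.parts_lt_of_le hri (by omega)⟩
      have hbelow : (i + 1, mu.parts i) ∈ cells la mu :=
        ⟨mu.antitone (by omega : i ≤ i + 1), show mu.parts i < la.parts (i + 1) by omega⟩
      exact (reflTransGen_of_mem_cells_row hij hcorner).trans
        (Relation.ReflTransGen.head ⟨hcorner, hbelow, Or.inr ⟨rfl, Or.inl rfl⟩⟩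
          (ih (i + 1) _ (by omega) hbelow))
  exact (hdown _ p.1 p.2 rfl hp).trans (reflTransGen_adj_symm (hdown _ q.1 q.2 rfl hq))

lemma cast_finsum_parts_sub (h : IsBorderStrip la mu r s) :
    ((∑ᶠ i, (la.parts i - mu.parts i) : ℕ) : ℤ) = beta la r - beta mu s := by
  have hsupp : (Function.support fun i => la.parts i - mu.parts i) ⊆ Finset.Ico r (s + 1) := by
    intro i hi
    rw [Function.mem_support] at hi
    rw [Finset.coe_Ico, Set.mem_Ico]
    by_contra hout
    exact hi (by rw [h.parts_eq i (by omega), Nat.sub_self])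
  rw [finsum_eq_sum_of_support_subset _ hsupp, Nat.cast_sum,
    Finset.sum_Ico_succ_top h.le]
  have hmid : ∀ i ∈ Finset.Ico r s, ((la.parts i - mu.parts i : ℕ) : ℤ) =
      -(beta la (i + 1) - beta la i) := by
    intro i hi
    rw [Finset.mem_Ico] at hi
    have := h.parts_succ_eq i hi.1 hi.2
    have := h.parts_le i
    simp only [beta]
    omega
  rw [Finset.sum_congr rfl hmid, Finset.sum_neg_distrib, Finset.sum_Ico_sub _ h.le]
  have := h.parts_le s
  simp only [beta]
  omega

lemma isRimHook (h : IsBorderStrip la mu r s) {k : ℕ} (hk : (k : ℤ) = beta la r - beta mu s) :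
    IsRimHook la mu k :=
  ⟨h.parts_le, by exact_mod_cast h.cast_finsum_parts_sub.trans hk.symm,
    fun _ hp _ hq => h.reflTransGen_cells hp hq, h.not_exists_square⟩

lemma exists_beta_eq (h : IsBorderStrip la mu r s) {i : ℕ} (hi : i ≠ s) :
    ∃ i', i' ≠ r ∧ beta mu i = beta la i' := by
  by_cases hmid : r ≤ i ∧ i < s
  · refine ⟨i + 1, by omega, ?_⟩
    have := h.parts_succ_eq i hmid.1 hmid.2
    simp only [beta]
    omega
  · exact ⟨i, by have := h.le; omega, by simp only [beta, h.parts_eq i (by omega)]⟩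

end IsBorderStrip

lemma parts_succ_eq_of_not_exists_square {la mu : Partition}
    (hsq : ¬ ∃ i j : ℕ, (i, j) ∈ cells la mu ∧ (i + 1, j) ∈ cells la mu ∧
      (i, j + 1) ∈ cells la mu ∧ (i + 1, j + 1) ∈ cells la mu)
    {i j : ℕ} (hij : (i, j) ∈ cells la mu) (hi₁j : (i + 1, j) ∈ cells la mu) :
    la.parts (i + 1) = mu.parts i + 1 := by
  have hmu := mu.antitone (by omega : i ≤ i + 1)
  have hla := la.antitone (by omega : i ≤ i + 1)
  simp only [mem_cells] at hij hi₁j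
  by_contra hne
  exact hsq ⟨i, mu.parts i, by simp only [mem_cells]; omega⟩

lemma IsRimHook.exists_isBorderStrip {la mu : Partition} {k : ℕ} (h : IsRimHook la mu k)
    (hk : k ≠ 0) : ∃ r s, IsBorderStrip la mu r s ∧ beta mu s = beta la r - k := by
  obtain ⟨hle, hsum, hconn, hsq⟩ := h
  set D := {i | mu.parts i < la.parts i}
  have hD : D.Nonempty := by
    by_contra hD
    have hzero : ∀ i, la.parts i - mu.parts i = 0 := fun i => by
      have : ¬ mu.parts i < la.parts i := fun hi => hD ⟨i, hi⟩
      omega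
    simp only [hzero, finsum_zero] at hsum
    exact hk hsum.symm
  have hbdd : BddAbove D := ⟨length la, fun i hi => by
    by_contra! hi'
    have := parts_eq_zero_of_length_le la hi'.le
    simp_all [D]⟩
  have hr : sInf D ∈ D := Nat.sInf_mem hD
  have hs : sSup D ∈ D := Nat.sSup_mem hD hbdd
  have hrs : sInf D ≤ sSup D := Nat.sInf_le hs
  have hstrip : IsBorderStrip la mu (sInf D) (sSup D) := by
    refine ⟨hrs, fun i hi => ?_, fun i hri his => ?_, hs⟩
    · have hiD : ¬ mu.parts i < la.parts i := fun hiD => by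
        have := Nat.sInf_le (s := D) hiD
        have := le_csSup hbdd (show i ∈ D from hiD)
        omega
      exact le_antisymm (hle i) (not_lt.mp hiD)
    · obtain ⟨j, hij, hi₁j⟩ :=
        exists_vertical_of_reflTransGen
          (hconn (sInf D, mu.parts (sInf D)) ⟨le_rfl, hr⟩
            (sSup D, mu.parts (sSup D)) ⟨le_rfl, hs⟩)
          hri his
      exact parts_succ_eq_of_not_exists_square hsq hij hi₁j
  have hsize := hstrip.cast_finsum_parts_sub
  rw [hsum] at hsize
  exact ⟨_, _, hstrip, by omega⟩

lemma exists_isBorderStrip_parts_eq (la : Partition) {r s v : ℕ} (hrs : r ≤ s)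
    (hv : la.parts (s + 1) ≤ v) (hvs : v < la.parts s) :
    ∃ mu, IsBorderStrip la mu r s ∧ mu.parts s = v := by
  let f : ℕ → ℕ := fun i =>
    if i < r then la.parts i else if i < s then la.parts (i + 1) - 1 else if i = s then v
    else la.parts i
  have hf_out : ∀ i, i < r ∨ s < i → f i = la.parts i := by
    intro i hi
    simp only [f]
    split_ifs <;> omega
  have hf_anti : Antitone f := by
    refine antitone_nat_of_succ_le fun i => ?_
    have h₁ := la.antitone (by omega : i ≤ i + 1)
    have h₂ := la.antitone (by omega : i + 1 ≤ i + 2)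
    simp only [f]
    split_ifs <;> grind
  have hfs : f s = v := by simp [f, not_lt.mpr hrs]
  obtain ⟨N, hN⟩ := la.fin_supp
  refine ⟨⟨f, fun _ _ hij => hf_anti hij, ⟨N + s + 1, fun i hi => ?_⟩⟩,
    ⟨hrs, hf_out, ?_, ?_⟩, ?_⟩
  · rw [hf_out i (by omega)]
    exact hN i (by omega)
  · intro i hri his
    have := la.antitone (by omega : i + 1 ≤ s)
    simp only [f]
    split_ifs <;> omega
  · exact hfs ▸ hvs
  · exact hfs

lemma _root_.Nat.exists_lt_apply_and_apply_succ_le {α : Type*} [LinearOrder α] (f : ℕ → α)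
    {y : α} {r n : ℕ} (hr : y < f r) (hrn : r ≤ n) (hn : f n ≤ y) :
    ∃ s, r ≤ s ∧ y < f s ∧ f (s + 1) ≤ y := by
  induction n, hrn using Nat.le_induction with
  | base => exact absurd hn (not_le.mpr hr)
  | succ n hrn ih =>
    by_cases hfn : f n ≤ y
    · exact ih hfn
    · exact ⟨n, hrn, not_le.mp hfn, hn⟩

/-- Otherwise moving the bead `k` positions down would remove a `k`-rim hook. -/
lemma exists_beta_eq_sub_of_forall_not_isRimHook {k : ℕ} {c : Partition}
    (hc : ∀ mu, ¬ IsRimHook c mu k) (r : ℕ) : ∃ i, beta c i = beta c r - k := by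
  by_contra! hno
  have hk : 0 < k := Nat.pos_of_ne_zero fun hk => hno r (by simp [hk])
  have hfar : beta c (c.parts 0 + r + k) ≤ beta c r - k := by
    have := c.antitone (Nat.zero_le (c.parts 0 + r + k))
    simp only [beta]
    omega
  obtain ⟨s, hrs, hs, hs₁⟩ := Nat.exists_lt_apply_and_apply_succ_le (beta c)
    (y := beta c r - k) (by omega) (by omega : r ≤ c.parts 0 + r + k) hfar
  have hs₁' := lt_of_le_of_ne hs₁ (hno (s + 1))
  simp only [beta] at hs hs₁'
  obtain ⟨mu, hmu, hmus⟩ := exists_isBorderStrip_parts_eq c hrs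
    (v := (c.parts r - r - k + s : ℤ).toNat) (by omega) (by omega)
  exact hc mu (hmu.isRimHook (by simp only [beta, hmus]; omega))

lemma runnerFull_beta_of_forall_not_isRimHook {k : ℕ} {c : Partition}
    (hc : ∀ mu, ¬ IsRimHook c mu k) (r : ℕ) : RunnerFull k c (beta c r) := by
  intro m
  induction m with
  | zero => exact ⟨r, by simp⟩
  | succ m ih =>
    obtain ⟨i, hi⟩ := ih
    obtain ⟨i', hi'⟩ := exists_beta_eq_sub_of_forall_not_isRimHook hc i
    exact ⟨i', by rw [hi', hi]; push_cast; ring⟩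

/-- Adding a `k`-rim hook moves one bead `k` positions up. Since all beads of `la` lie below `k`,
the moved bead cannot start on a full runner through `t ≥ 0`, so that runner stays full. -/
lemma RunnerFull.of_isRimHook {k : ℕ} {la mu : Partition} {t : ℤ} (h : IsRimHook la mu k)
    (hla : la.parts 0 < k) (ht : 0 ≤ t) (hmu : RunnerFull k mu t) : RunnerFull k la t := by
  obtain ⟨r, s, hstrip, hs⟩ := h.exists_isBorderStrip (by omega)
  have hmoved : ∀ i, beta mu i ≠ beta la r := by
    intro i hi
    by_cases his : i = s
    · subst his
      omega
    · obtain ⟨i', hi'r, hi'⟩ := hstrip.exists_beta_eq his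
      exact hi'r ((beta_strictAnti la).injective (hi'.symm.trans hi))
  intro m
  obtain ⟨i, hi⟩ := hmu m
  by_cases his : i = s
  · subst his
    have hr := beta_le_parts_zero la r
    cases m with
    | zero => push_cast at hi; omega
    | succ m =>
      obtain ⟨i₂, hi₂⟩ := hmu m
      exact (hmoved i₂ (by push_cast at hi; linarith)).elim
  · obtain ⟨i', -, hi'⟩ := hstrip.exists_beta_eq his
    exact ⟨i', hi' ▸ hi⟩

lemma RunnerFull.of_reflTransGen {k : ℕ} {la c : Partition} {t : ℤ}
    (h : Relation.ReflTransGen (fun a b => IsRimHook a b k) la c) (hla : la.parts 0 < k)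
    (ht : 0 ≤ t) (hc : RunnerFull k c t) : RunnerFull k la t := by
  induction h using Relation.ReflTransGen.head_induction_on with
  | refl => exact hc
  | head hab _ ih => exact (ih ((hab.1 0).trans_lt hla)).of_isRimHook hab hla ht

theorem pet_eq_zero_of_core_long_general (k : ℕ) (l : Partition)
    (h1 : l.parts 0 < k) (c : Partition) (hc : IsCore k l c) (hlen : 1 < length c) :
    pet k l = 0 := by
  obtain ⟨hchain, hcore⟩ := hc
  have hc₁ : 0 ≤ beta c 1 := by
    have := parts_ne_zero_of_lt_length c hlen
    simp only [beta]
    omega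
  have hc₀ : beta c 1 < beta c 0 := beta_strictAnti c zero_lt_one
  exact pet_eq_zero_of_runnerFull h1 hc₁ hc₀
    ((runnerFull_beta_of_forall_not_isRimHook hcore 0).of_reflTransGen hchain h1 (by omega))
    ((runnerFull_beta_of_forall_not_isRimHook hcore 1).of_reflTransGen hchain h1 hc₁)

/-- if `λ_1 < k` and the `k`-core of `λ` has more than one part,
then `pet_k(λ) = 0`. -/
theorem pet_eq_zero_of_core_long (k : ℕ) (hk : 1 ≤ k) (l : Partition)
    (h1 : l.parts 0 < k) (c : Partition) (hc : IsCore k l c) (hlen : 1 < length c) :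
    pet k l = 0 :=
  pet_eq_zero_of_core_long_general k l h1 c hc hlen

end Petrie
end

section
/- For every k ≥ 2, Σ m_λ, summed over partitions λ of 2k-1 with λ ⊴ (k-1,k-1,1) in dominance order, equals Σ_{i=0}^{k-2} (-1)^i s_{(k-1, k-1-i, 1^{i+1})}. -/
open scoped Classical

namespace Petrie

/-!
For `λ ⊢ 2k-1`, `λ ⊴ (k-1,k-1,1)` just says `λ₁ ≤ k-1`, so the left side is the sum of all
monomials of degree `2k-1` with every exponent below `k`: the Petrie function
`G(k,2k-1) = h_{2k-1} - p_k h_{k-1}`, since at most one exponent can reach `k`.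

On the right, expanding the Jacobi–Trudi determinant of `(a,c,1^n)` along its first column gives
`s_{(a,c,1^n)} = h_a s_{(c,1^n)} - h_{c-1} s_{(a+1,1^n)}`, and the hooks are partial sums
`s_{(a,1^m)} = (-1)^m Σ_{t ≤ m} (-1)^t h_{a+m-t} e_t` of the relation `H(z) E(-z) = 1`. Summing over
`i`, the terms `h_{k-1} s_{(k-1-i,1^{i+1})}` collapse by Newton's identity to `h_{k-1}(h_k - p_k)`,
and the terms `h_{k-2-i} s_{(k,1^{i+1})}` collapse, again through `H(z) E(-z) = 1`, to
`h_k h_{k-1} - h_{2k-1}`.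
-/

open Finset

lemma degree_eq_finsupp_degree (d : ℕ →₀ ℕ) : degree d = d.degree := rfl

lemma card_support_le_degree (d : ℕ →₀ ℕ) : #d.support ≤ degree d := by
  rw [degree_eq_finsupp_degree, Finsupp.degree_apply, card_eq_sum_ones]
  exact sum_le_sum fun i hi => Nat.one_le_iff_ne_zero.mpr (Finsupp.mem_support_iff.mp hi)

lemma mul_apply (f g : SymFn) (d : ℕ →₀ ℕ) :
    (f * g) d = ∑ p ∈ antidiagonal d, f p.1 * g p.2 :=
  MvPowerSeries.coeff_mul d f g

lemma sum_apply {α : Type*} (s : Finset α) (f : α → SymFn) (d : ℕ →₀ ℕ) :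
    (∑ i ∈ s, f i) d = ∑ i ∈ s, f i d :=
  map_sum (MvPowerSeries.coeff d) f s

lemma smul_apply (c : ℤ) (f : SymFn) (d : ℕ →₀ ℕ) : (c • f) d = c * f d := rfl

lemma sub_apply (f g : SymFn) (d : ℕ →₀ ℕ) : (f - g) d = f d - g d := rfl

lemma one_apply (d : ℕ →₀ ℕ) : (1 : SymFn) d = if d = 0 then 1 else 0 :=
  MvPowerSeries.coeff_one d

lemma hfun_zero : hfun 0 = 1 := by
  funext d
  show (if degree d = 0 then 1 else 0) = MvPowerSeries.coeff d 1
  simp only [MvPowerSeries.coeff_one, degree_eq_finsupp_degree, Finsupp.degree_eq_zero_iff]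

lemma esymmF_zero : esymmF 0 = 1 := by
  funext d
  show (if degree d = 0 ∧ ∀ i, d i ≤ 1 then 1 else 0) = MvPowerSeries.coeff d 1
  simp only [MvPowerSeries.coeff_one, degree_eq_finsupp_degree, Finsupp.degree_eq_zero_iff]
  exact if_congr (and_iff_left_of_imp fun h i => by simp [h]) rfl rfl

lemma toFinsupp_val_apply (A : Finset ℕ) (i : ℕ) : A.val.toFinsupp i = if i ∈ A then 1 else 0 :=
  Multiset.count_eq_of_nodup A.nodup

lemma degree_toFinsupp_val (A : Finset ℕ) : degree A.val.toFinsupp = #A := by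
  rw [degree_eq_finsupp_degree, Finsupp.degree_apply, Multiset.toFinsupp_support]
  simp

lemma eq_toFinsupp_support_val {d : ℕ →₀ ℕ} (h : ∀ i, d i ≤ 1) : d = d.support.val.toFinsupp := by
  ext i
  have := h i
  rw [toFinsupp_val_apply]
  split_ifs with hi
  · have := Finsupp.mem_support_iff.mp hi
    omega
  · exact Finsupp.notMem_support_iff.mp hi

lemma card_filter_antidiagonal_eq_choose (b : ℕ) (d : ℕ →₀ ℕ) :
    #{p ∈ antidiagonal d | degree p.2 = b ∧ ∀ i, p.2 i ≤ 1} = (#d.support).choose b := by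
  rw [← card_powersetCard b d.support]
  refine card_nbij' (fun p => p.2.support) (fun A => (d - A.val.toFinsupp, A.val.toFinsupp))
    ?_ ?_ ?_ ?_
  · intro p hp
    simp only [coe_filter, HasAntidiagonal.mem_antidiagonal, Set.mem_ofPred_eq] at hp
    obtain ⟨rfl, hdeg, h01⟩ := hp
    simp only [mem_coe, mem_powersetCard]
    refine ⟨Finsupp.support_mono le_add_self, ?_⟩
    rw [← hdeg, eq_toFinsupp_support_val h01, degree_toFinsupp_val, ← eq_toFinsupp_support_val h01]
  · intro A hA
    simp only [mem_coe, mem_powersetCard] at hA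
    have hle : A.val.toFinsupp ≤ d := fun i => by
      rw [toFinsupp_val_apply]
      split_ifs with hi
      · exact Nat.one_le_iff_ne_zero.mpr (Finsupp.mem_support_iff.mp (hA.1 hi))
      · exact Nat.zero_le _
    simp only [coe_filter, HasAntidiagonal.mem_antidiagonal, Set.mem_ofPred_eq]
    refine ⟨tsub_add_cancel_of_le hle, by rw [degree_toFinsupp_val, hA.2], fun i => ?_⟩
    rw [toFinsupp_val_apply]
    split_ifs <;> omega
  · intro p hp
    simp only [coe_filter, HasAntidiagonal.mem_antidiagonal, Set.mem_ofPred_eq] at hp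
    obtain ⟨rfl, -, h01⟩ := hp
    simp only [← eq_toFinsupp_support_val h01, add_tsub_cancel_right]
  · intro A _
    simp [Multiset.toFinsupp_support]

lemma hfun_mul_esymmF_apply (a b : ℕ) (d : ℕ →₀ ℕ) :
    (hfun a * esymmF b) d = if degree d = a + b then ((#d.support).choose b : ℤ) else 0 := by
  have hterm : ∀ p ∈ antidiagonal d, hfun a p.1 * esymmF b p.2 =
      if degree d = a + b ∧ (degree p.2 = b ∧ ∀ i, p.2 i ≤ 1) then 1 else 0 := by
    intro p hp
    rw [HasAntidiagonal.mem_antidiagonal] at hp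
    have hdeg : degree d = degree p.1 + degree p.2 := by
      rw [← hp, degree_eq_finsupp_degree, map_add]; rfl
    simp only [hfun, esymmF]
    split_ifs <;> grind
  rw [← card_filter_antidiagonal_eq_choose, mul_apply, sum_congr rfl hterm]
  split_ifs with hd
  · simp only [hd, true_and, natCast_card_filter]
  · simp only [hd, false_and, if_false, sum_const_zero]

lemma psumF_mul_apply {k : ℕ} (hk : k ≠ 0) (f : SymFn) (d : ℕ →₀ ℕ) :
    (psumF k * f) d = ∑ i ∈ d.support with k ≤ d i, f (d - Finsupp.single i k) := by
  have hterm : ∀ p ∈ antidiagonal d, psumF k p.1 * f p.2 =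
      if ∃ i, p.1 = Finsupp.single i k then f p.2 else 0 := fun p _ => by
    simp only [psumF, ite_mul, one_mul, zero_mul]
  rw [mul_apply, sum_congr rfl hterm, ← sum_filter]
  refine (sum_bij (fun i _ => (Finsupp.single i k, d - Finsupp.single i k)) ?_ ?_ ?_ ?_).symm
  · intro i hi
    rw [mem_filter] at hi ⊢
    refine ⟨HasAntidiagonal.mem_antidiagonal.mpr (add_tsub_cancel_of_le ?_), i, rfl⟩
    exact Finsupp.single_le_iff.mpr hi.2
  · intro i _ j _ h
    exact (Finsupp.single_left_inj hk).mp (congrArg Prod.fst h)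
  · rintro ⟨q, r⟩ hp
    rw [mem_filter, HasAntidiagonal.mem_antidiagonal] at hp
    obtain ⟨rfl, i, rfl⟩ := hp
    have hi : k ≤ (Finsupp.single i k + r) i := by simp
    have hsupp : i ∈ (Finsupp.single i k + r).support :=
      Finsupp.mem_support_iff.mpr ((Nat.pos_of_ne_zero hk).trans_le hi).ne'
    exact ⟨i, mem_filter.mpr ⟨hsupp, hi⟩, by simp⟩
  · intro i _
    rfl

lemma card_filter_le_apply_le_one {k : ℕ} {d : ℕ →₀ ℕ} (h : degree d < 2 * k) :
    #{i ∈ d.support | k ≤ d i} ≤ 1 := by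
  refine card_le_one.mpr fun i hi j hj => by_contra fun hij => ?_
  simp only [mem_filter] at hi hj
  have : d i + d j ≤ degree d := by
    rw [← sum_pair hij]
    exact sum_le_sum_of_subset (insert_subset hi.1 (singleton_subset_iff.mpr hj.1))
  omega

lemma psumF_mul_hfun_apply {k n : ℕ} (hk : k ≠ 0) (hkn : k ≤ n) (d : ℕ →₀ ℕ) :
    (psumF k * hfun (n - k)) d =
      if degree d = n then (#{i ∈ d.support | k ≤ d i} : ℤ) else 0 := by
  rw [psumF_mul_apply hk]
  have hdeg : ∀ i ∈ d.support.filter (k ≤ d ·),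
      hfun (n - k) (d - Finsupp.single i k) = if degree d = n then 1 else 0 := fun i hi => by
    have hle : Finsupp.single i k ≤ d := Finsupp.single_le_iff.mpr (mem_filter.mp hi).2
    have h := congrArg Finsupp.degree (tsub_add_cancel_of_le hle)
    simp only [map_add, Finsupp.degree_single, ← degree_eq_finsupp_degree] at h
    exact if_congr (by omega) rfl rfl
  rw [sum_congr rfl hdeg]
  split_ifs <;> simp

lemma G_eq_hfun_sub_psumF_mul_hfun {k n : ℕ} (hkn : k ≤ n) (hn : n < 2 * k) :
    G k n = hfun n - psumF k * hfun (n - k) := by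
  funext d
  rw [sub_apply, psumF_mul_hfun_apply (by omega) hkn]
  show (if degree d = n ∧ ∀ i, d i < k then 1 else 0) = (if degree d = n then 1 else 0) - _
  by_cases hd : degree d = n
  · have hall : (∀ i, d i < k) ↔ #{i ∈ d.support | k ≤ d i} = 0 := by
      simp only [card_eq_zero, filter_eq_empty_iff, Finsupp.mem_support_iff, not_le]
      exact ⟨fun h i _ => h i, fun h i => by by_cases hi : d i = 0 <;> grind⟩
    rcases Nat.le_one_iff_eq_zero_or_eq_one.mp (card_filter_le_apply_le_one (hd ▸ hn)) with h | h
      <;> simp [hd, hall, h]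
  · simp [hd]

lemma alternating_sum_choose_of_le {s m : ℕ} (h : s ≤ m) :
    ∑ t ∈ range (m + 1), (-1 : ℤ) ^ t * s.choose t = if s = 0 then 1 else 0 := by
  rcases s with _ | s
  · simp [sum_range_succ']
  · rw [Int.alternating_sum_range_choose_eq_choose, Nat.choose_eq_zero_of_lt (by omega)]
    simp

/-- `(-1)^m • hePartialSum (a + m) m` is the hook Schur function `s_{(a,1^m)}`
(`det_jacobiTrudi_hook`), and `hePartialSum n n` is the full relation `Σ_t (-1)^t h_{n-t} e_t`. -/
noncomputable def hePartialSum (n m : ℕ) : SymFn :=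
  ∑ t ∈ range (m + 1), (-1 : ℤ) ^ t • (hfun (n - t) * esymmF t)

lemma hePartialSum_apply {n m : ℕ} (hm : m ≤ n) (d : ℕ →₀ ℕ) :
    hePartialSum n m d =
      if degree d = n then ∑ t ∈ range (m + 1), (-1 : ℤ) ^ t * (#d.support).choose t else 0 := by
  rw [hePartialSum, sum_apply]
  have hterm : ∀ t ∈ range (m + 1), ((-1 : ℤ) ^ t • (hfun (n - t) * esymmF t)) d =
      if degree d = n then (-1 : ℤ) ^ t * (#d.support).choose t else 0 := by
    intro t ht
    have : n - t + t = n := Nat.sub_add_cancel (by have := mem_range.mp ht; omega)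
    rw [smul_apply, hfun_mul_esymmF_apply, this]
    split_ifs <;> simp
  rw [sum_congr rfl hterm]
  split_ifs <;> simp

lemma hePartialSum_zero (n : ℕ) : hePartialSum n 0 = hfun n := by
  simp [hePartialSum, esymmF_zero]

lemma hePartialSum_succ (n m : ℕ) : hePartialSum n (m + 1) =
    hePartialSum n m + (-1 : ℤ) ^ (m + 1) • (hfun (n - (m + 1)) * esymmF (m + 1)) :=
  sum_range_succ _ _

lemma hePartialSum_self (n : ℕ) : hePartialSum n n = if n = 0 then 1 else 0 := by
  funext d
  rw [hePartialSum_apply le_rfl]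
  split_ifs with hd hn hn
  · rw [alternating_sum_choose_of_le (hd ▸ card_support_le_degree d), one_apply]
    simp
  · rw [alternating_sum_choose_of_le (hd ▸ card_support_le_degree d), if_neg]
    · rfl
    · rw [Finsupp.card_support_eq_zero]
      rintro rfl
      exact hn hd.symm
  · rw [one_apply, if_neg]
    rintro rfl
    exact hd hn.symm
  · rfl

lemma neg_one_pow_smul_hePartialSum_succ (m : ℕ) :
    (-1 : ℤ) ^ m • hePartialSum (m + 1) m = esymmF (m + 1) := by
  have h := hePartialSum_self (m + 1)
  rw [hePartialSum_succ, if_neg m.succ_ne_zero, Nat.sub_self, hfun_zero, one_mul,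
    add_eq_zero_iff_eq_neg, pow_succ] at h
  rw [h, smul_neg, smul_smul, ← mul_assoc, ← pow_add, Even.neg_one_pow ⟨m, rfl⟩]
  simp

lemma sum_range_hePartialSum {n : ℕ} (hn : 1 ≤ n) : ∑ m ∈ range n, hePartialSum n m = psumF n := by
  funext d
  rw [sum_apply, sum_congr rfl fun m hm => hePartialSum_apply (mem_range.mp hm).le d]
  show _ = if ∃ i, d = Finsupp.single i n then 1 else 0
  by_cases hd : degree d = n
  · obtain ⟨s, hs⟩ : ∃ s, #d.support = s + 1 :=
      Nat.exists_eq_add_one.mpr (Finset.card_pos.mpr (Finsupp.support_nonempty_iff.mpr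
        (by rintro rfl; rw [degree_eq_finsupp_degree, map_zero] at hd; omega)))
    obtain ⟨n, rfl⟩ : ∃ n', n = n' + 1 := Nat.exists_eq_add_one.mpr hn
    have hsn : s ≤ n := by have := card_support_le_degree d; omega
    simp only [hd, if_true, hs, Int.alternating_sum_range_choose_eq_choose]
    rw [alternating_sum_choose_of_le hsn]
    refine if_congr ⟨fun hs0 => ?_, ?_⟩ rfl rfl
    · obtain ⟨i, -, hi⟩ := Finsupp.card_support_eq_one.mp (hs0 ▸ hs)
      have hdi : degree d = d i := by
        conv_lhs => rw [hi]
        exact Finsupp.degree_single i (d i)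
      exact ⟨i, by rwa [← hdi, hd] at hi⟩
    · rintro ⟨i, rfl⟩
      rw [Finsupp.support_single _ n.succ_ne_zero, card_singleton] at hs
      omega
  · rw [if_neg fun ⟨i, hi⟩ => hd (hi ▸ Finsupp.degree_single i n)]
    simp [hd]

/-- With `H = Σ h_r z^r`, `E = Σ (-1)^t e_t z^t` and `A = Σ h_{a+j} z^j`, `hePartialSum (a + m) m`
is the coefficient of `z^m` in `E A`, and the left side is the coefficient of `z^M` in
`(E A) H = A`. -/
lemma sum_range_hfun_mul_hePartialSum (a M : ℕ) :
    ∑ m ∈ range (M + 1), hfun (M - m) * hePartialSum (a + m) m = hfun (a + M) := by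
  let H : PowerSeries SymFn := PowerSeries.mk hfun
  let E : PowerSeries SymFn := PowerSeries.mk fun t => (-1 : ℤ) ^ t • esymmF t
  let A : PowerSeries SymFn := PowerSeries.mk fun j => hfun (a + j)
  have hEH : E * H = 1 := by
    refine PowerSeries.ext fun n => ?_
    rw [PowerSeries.coeff_mul, Nat.sum_antidiagonal_eq_sum_range_succ_mk, PowerSeries.coeff_one,
      ← hePartialSum_self, hePartialSum]
    refine sum_congr rfl fun t _ => ?_
    simp only [E, H, PowerSeries.coeff_mk, smul_mul_assoc, mul_comm]
  have hEA : ∀ m, PowerSeries.coeff m (E * A) = hePartialSum (a + m) m := by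
    intro m
    rw [PowerSeries.coeff_mul, Nat.sum_antidiagonal_eq_sum_range_succ_mk, hePartialSum]
    refine sum_congr rfl fun t ht => ?_
    simp only [E, A, PowerSeries.coeff_mk, smul_mul_assoc, mul_comm,
      Nat.add_sub_assoc (Nat.le_of_lt_succ (mem_range.mp ht))]
  calc ∑ m ∈ range (M + 1), hfun (M - m) * hePartialSum (a + m) m
      = PowerSeries.coeff M (E * A * H) := by
        rw [PowerSeries.coeff_mul, Nat.sum_antidiagonal_eq_sum_range_succ_mk]
        refine sum_congr rfl fun m _ => ?_
        simp only [hEA, H, PowerSeries.coeff_mk, mul_comm]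
    _ = hfun (a + M) := by
        rw [mul_right_comm, hEH, one_mul, PowerSeries.coeff_mk]

@[ext] lemma Partition.ext {l l' : Partition} (h : l.parts = l'.parts) : l = l' := by
  cases l; cases l'; simpa using h

lemma parts_eq_zero_iff (l : Partition) (i : ℕ) : l.parts i = 0 ↔ length l ≤ i := by
  obtain ⟨N, hN⟩ := l.fin_supp
  have hmem : l.parts (length l) = 0 := Nat.sInf_mem (s := {i | l.parts i = 0}) ⟨N, hN N le_rfl⟩
  exact ⟨fun h => Nat.sInf_le h, fun h => Nat.eq_zero_of_le_zero (hmem ▸ l.antitone h)⟩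

lemma psize_eq_sum_range {l : Partition} {N : ℕ} (hN : length l ≤ N) :
    psize l = ∑ i ∈ range N, l.parts i :=
  finsum_eq_finsetSum_of_support_subset _ fun i hi => by
    simpa using (not_le.mp (mt (parts_eq_zero_iff l i).mpr hi)).trans_le hN

lemma sum_range_parts_le_psize (l : Partition) (r : ℕ) : ∑ i ∈ range r, l.parts i ≤ psize l := by
  rw [psize_eq_sum_range (le_max_right r (length l))]
  exact sum_le_sum_of_subset (range_subset_range.mpr (le_max_left _ _))

lemma ofList_parts {L : List ℕ} (h : L.Pairwise (· ≥ ·)) (i : ℕ) :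
    (ofList L).parts i = L.getD i 0 := by
  show (L.drop i).foldr max 0 = _
  have hdrop := h.sublist (List.drop_sublist i L)
  rcases hL : L.drop i with _ | ⟨a, t⟩
  · simp [List.getD_eq_getElem?_getD, ← List.head?_drop, hL]
  · rw [hL, List.pairwise_cons] at hdrop
    have hmax : t.foldr max 0 ≤ a := List.max_le_of_forall_le t a hdrop.1
    rw [List.foldr_cons, max_eq_left hmax]
    simp [List.getD_eq_getElem?_getD, ← List.head?_drop, hL]

lemma length_ofList {L : List ℕ} (h : L.Pairwise (· ≥ ·)) (hpos : ∀ x ∈ L, 0 < x) :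
    length (ofList L) = L.length := by
  refine le_antisymm ((parts_eq_zero_iff _ _).mp ?_) (not_lt.mp fun hlt => ?_)
  · rw [ofList_parts h, List.getD_eq_default _ _ le_rfl]
  · have := (parts_eq_zero_iff (ofList L) _).mpr le_rfl
    rw [ofList_parts h, List.getD_eq_getElem _ _ hlt] at this
    exact (hpos _ (List.getElem_mem hlt)).ne' this

lemma dominates_ofList_iff {b : ℕ} (hb : 1 ≤ b) {l : Partition} (hl : psize l = 2 * b + 1) :
    Dominates (ofList [b, b, 1]) l ↔ l.parts 0 ≤ b := by
  have hsorted : [b, b, 1].Pairwise (· ≥ ·) := by simp [hb]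
  have hμ := ofList_parts hsorted
  have hlen : length (ofList [b, b, 1]) = 3 := length_ofList hsorted (by simp [show 0 < b by omega])
  refine ⟨fun h => by simpa [hμ] using h 1, fun h r => ?_⟩
  rcases r with _ | _ | _ | r
  · simp
  · simpa [hμ] using h
  · have := l.antitone (Nat.zero_le 1)
    simp only [sum_range_succ, sum_range_zero, hμ, List.getD_cons_zero, List.getD_cons_succ,
      zero_add]
    omega
  · have hsize : psize (ofList [b, b, 1]) = 2 * b + 1 := by
      simp only [psize_eq_sum_range hlen.le, sum_range_succ, sum_range_zero, hμ,
        List.getD_cons_zero, List.getD_cons_succ]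
      omega
    rw [← psize_eq_sum_range (hlen.trans_le (by omega)), hsize, ← hl]
    exact sum_range_parts_le_psize l _

noncomputable def partsMultiset (l : Partition) : Multiset ℕ :=
  (Multiset.range (length l)).map l.parts

noncomputable def exponents (d : ℕ →₀ ℕ) : Multiset ℕ := d.support.val.map d

lemma pos_of_mem_partsMultiset {l : Partition} {x : ℕ} (hx : x ∈ partsMultiset l) : 0 < x := by
  obtain ⟨i, hi, rfl⟩ := Multiset.mem_map.mp hx
  exact Nat.pos_of_ne_zero fun h => by
    have := (parts_eq_zero_iff l i).mp h
    simp at hi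
    omega

lemma sum_partsMultiset (l : Partition) : (partsMultiset l).sum = psize l := by
  rw [psize_eq_sum_range le_rfl]
  rfl

lemma partsMultiset_ofList {L : List ℕ} (h : L.Pairwise (· ≥ ·)) (hpos : ∀ x ∈ L, 0 < x) :
    partsMultiset (ofList L) = L := by
  rw [partsMultiset, length_ofList h hpos, Multiset.range, Multiset.map_coe, Multiset.coe_eq_coe]
  refine List.Perm.of_eq (List.ext_getElem (by simp) fun i h1 h2 => ?_)
  rw [List.getElem_map, List.getElem_range, ofList_parts h, List.getD_eq_getElem]

lemma ofList_sort_partsMultiset (l : Partition) : ofList ((partsMultiset l).sort (· ≥ ·)) = l := by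
  have hsort : (partsMultiset l).sort (· ≥ ·) = (List.range (length l)).map l.parts := by
    refine List.Perm.eq_of_pairwise' (Multiset.pairwise_sort _ _) ?_
      (Multiset.coe_eq_coe.mp (by rw [Multiset.sort_eq]; rfl))
    exact List.pairwise_map.mpr (List.pairwise_lt_range.imp fun h => l.antitone h.le)
  ext i
  rw [ofList_parts (Multiset.pairwise_sort _ _), hsort]
  by_cases hi : i < length l
  · simp [hi]
  · rw [List.getD_eq_default _ _ (by simpa using not_lt.mp hi),
      (parts_eq_zero_iff l i).mpr (not_lt.mp hi)]

lemma partsMultiset_injective : Function.Injective partsMultiset := fun l l' h => by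
  rw [← ofList_sort_partsMultiset l, h, ofList_sort_partsMultiset]

lemma finite_setOf_psize_eq (n : ℕ) : {l : Partition | psize l = n}.Finite := by
  rw [← Set.finite_coe_iff]
  refine Finite.of_injective (β := Nat.Partition n)
    (fun l => ⟨partsMultiset l, pos_of_mem_partsMultiset, (sum_partsMultiset l).trans l.2⟩)
    fun l l' h => Subtype.ext (partsMultiset_injective (congrArg Nat.Partition.parts h))

lemma parts_zero_le_iff (l : Partition) (b : ℕ) :
    l.parts 0 ≤ b ↔ ∀ x ∈ partsMultiset l, x ≤ b := by
  refine ⟨fun h x hx => ?_, fun h => ?_⟩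
  · obtain ⟨i, -, rfl⟩ := Multiset.mem_map.mp hx
    exact (l.antitone (Nat.zero_le i)).trans h
  · rcases Nat.eq_zero_or_pos (length l) with h0 | hpos
    · simp [(parts_eq_zero_iff l 0).mpr h0.le]
    · exact h _ (Multiset.mem_map_of_mem _ (Multiset.mem_range.mpr hpos))

noncomputable def shape (d : ℕ →₀ ℕ) : Partition := ofList ((exponents d).sort (· ≥ ·))

lemma partsMultiset_shape (d : ℕ →₀ ℕ) : partsMultiset (shape d) = exponents d := by
  rw [shape, partsMultiset_ofList (Multiset.pairwise_sort _ _), Multiset.sort_eq]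
  intro x hx
  rw [← Multiset.mem_coe, Multiset.sort_eq] at hx
  obtain ⟨i, hi, rfl⟩ := Multiset.mem_map.mp hx
  exact Nat.pos_of_ne_zero (Finsupp.mem_support_iff.mp hi)

lemma msym_apply (l : Partition) (d : ℕ →₀ ℕ) : msym l d = if l = shape d then 1 else 0 := by
  show (if exponents d = partsMultiset l then 1 else 0) = _
  simp only [← partsMultiset_shape, partsMultiset_injective.eq_iff, eq_comm]

lemma finsum_mem_msym_apply {S : Set Partition} (hS : S.Finite) (d : ℕ →₀ ℕ) :
    (∑ᶠ l ∈ S, msym l) d = if shape d ∈ S then 1 else 0 := by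
  rw [finsum_mem_eq_finite_toFinset_sum _ hS, sum_apply]
  simp [msym_apply]

lemma finsum_msym_parts_zero_le (n b : ℕ) :
    ∑ᶠ l ∈ {l : Partition | psize l = n ∧ l.parts 0 ≤ b}, msym l = G (b + 1) n := by
  funext d
  rw [finsum_mem_msym_apply ((finite_setOf_psize_eq n).subset fun l hl => hl.1)]
  have hsize : psize (shape d) = degree d := by
    rw [← sum_partsMultiset, partsMultiset_shape]; rfl
  have hmax : (shape d).parts 0 ≤ b ↔ ∀ i, d i < b + 1 := by
    rw [parts_zero_le_iff, partsMultiset_shape, exponents]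
    simp only [Multiset.mem_map, Finset.mem_val, Finsupp.mem_support_iff, forall_exists_index,
      and_imp, forall_apply_eq_imp_iff₂, Nat.lt_succ_iff]
    exact ⟨fun h i => by by_cases hi : d i = 0 <;> simp_all, fun h i _ => h i⟩
  simp only [Set.mem_ofPred_eq, hsize, hmax]
  rfl

lemma hz_natCast (a : ℕ) : hz a = hfun a := by
  rw [hz, if_pos (Int.natCast_nonneg a), Int.toNat_natCast]

lemma hz_zero : hz 0 = 1 := by
  rw [← Nat.cast_zero, hz_natCast, hfun_zero]

lemma hz_of_neg {n : ℤ} (h : n < 0) : hz n = 0 := if_neg (by omega)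

noncomputable def jacobiTrudi (p : ℕ → ℕ) (n : ℕ) : Matrix (Fin n) (Fin n) SymFn :=
  Matrix.of fun r c => hz ((p r : ℤ) - (r : ℕ) + (c : ℕ))

lemma schur_eq_det_jacobiTrudi (l : Partition) : schur l = (jacobiTrudi l.parts (length l)).det :=
  rfl

lemma jacobiTrudi_congr {p q : ℕ → ℕ} {n : ℕ} (h : ∀ r < n, p r = q r) :
    jacobiTrudi p n = jacobiTrudi q n :=
  Matrix.ext fun r c => by simp only [jacobiTrudi, Matrix.of_apply, h r r.isLt]

/-- Expansion along the first column, whose entries `h_{1-r}` vanish from the third row on. -/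
lemma det_jacobiTrudi_succ_succ (p : ℕ → ℕ) (n : ℕ) (hp : ∀ r, 2 ≤ r → p r = 1) :
    (jacobiTrudi p (n + 2)).det =
      hfun (p 0) * (jacobiTrudi (fun r => p (r + 1)) (n + 1)).det -
        hz ((p 1 : ℤ) - 1) *
          (jacobiTrudi (fun r => if r = 0 then p 0 + 1 else p (r + 1)) (n + 1)).det := by
  rw [Matrix.det_succ_column_zero, Fin.sum_univ_succ, Fin.sum_univ_succ]
  have hzero : ∀ r : Fin n, jacobiTrudi p (n + 2) r.succ.succ 0 = 0 := fun r => by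
    simp only [jacobiTrudi, Matrix.of_apply, Fin.val_succ, Fin.val_zero]
    exact hz_of_neg (by rw [hp _ (by omega)]; push_cast; omega)
  have hminor0 : (jacobiTrudi p (n + 2)).submatrix (Fin.succAbove 0) Fin.succ =
      jacobiTrudi (fun r => p (r + 1)) (n + 1) := by
    refine Matrix.ext fun r c => ?_
    simp only [Matrix.submatrix_apply, Fin.succAbove_zero, jacobiTrudi, Matrix.of_apply,
      Fin.val_succ]
    congr 1
    push_cast
    ring
  have hminor1 : (jacobiTrudi p (n + 2)).submatrix (Fin.succAbove 1) Fin.succ =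
      jacobiTrudi (fun r => if r = 0 then p 0 + 1 else p (r + 1)) (n + 1) := by
    refine Matrix.ext fun r c => ?_
    cases r using Fin.cases with
    | zero =>
      simp only [Matrix.submatrix_apply, Fin.one_succAbove_zero, jacobiTrudi, Matrix.of_apply,
        Fin.val_succ, Fin.val_zero, ↓reduceIte]
      push_cast
      ring_nf
    | succ r =>
      simp only [Matrix.submatrix_apply, Fin.one_succAbove_succ, jacobiTrudi, Matrix.of_apply,
        Fin.val_succ, Nat.add_one_ne_zero, ↓reduceIte]
      push_cast
      ring_nf
  simp only [hzero, mul_zero, zero_mul, sum_const_zero, add_zero, hminor0,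
    Fin.succ_zero_eq_one, hminor1]
  simp [jacobiTrudi, hz_natCast, sub_eq_add_neg]

lemma det_jacobiTrudi_hook (a m : ℕ) :
    (jacobiTrudi (fun r => if r = 0 then a else 1) (m + 1)).det =
      (-1 : ℤ) ^ m • hePartialSum (a + m) m := by
  induction m generalizing a with
  | zero =>
    simp [jacobiTrudi, hz_natCast, hePartialSum_zero]
  | succ m ih =>
    have hcol := ih 1
    rw [add_comm 1 m, neg_one_pow_smul_hePartialSum_succ] at hcol
    simp only [ite_self] at hcol
    rw [det_jacobiTrudi_succ_succ _ _ fun r hr => if_neg (by omega)]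
    simp only [↓reduceIte, Nat.add_one_ne_zero, one_ne_zero, hcol, ih]
    rw [Nat.cast_one, sub_self, hz_zero, one_mul, hePartialSum_succ, Nat.add_sub_cancel,
      add_right_comm, smul_add, smul_smul, ← pow_add, Even.neg_one_pow ⟨m + 1, rfl⟩, one_smul,
      pow_succ, mul_neg_one, neg_smul]
    abel

lemma schur_ofList_cons_cons_replicate {a c : ℕ} (hc : 1 ≤ c) (hca : c ≤ a) (n : ℕ) :
    schur (ofList (a :: c :: List.replicate n 1)) =
      (-1 : ℤ) ^ n •
        (hfun a * hePartialSum (c + n) n - hfun (c - 1) * hePartialSum (a + 1 + n) n) := by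
  have hsorted : (a :: c :: List.replicate n 1).Pairwise (· ≥ ·) := by
    simp only [List.pairwise_cons, List.mem_cons, List.mem_replicate]
    exact ⟨by grind, by grind, List.pairwise_replicate_of_refl⟩
  have hlength : length (ofList (a :: c :: List.replicate n 1)) = n + 2 := by
    rw [length_ofList hsorted (by simp [show 0 < a by omega, show 0 < c by omega])]
    simp
  have hrows : jacobiTrudi (ofList (a :: c :: List.replicate n 1)).parts (n + 2) =
      jacobiTrudi (fun r => if r = 0 then a else if r = 1 then c else 1) (n + 2) := by
    refine jacobiTrudi_congr fun r hr => ?_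
    rw [ofList_parts hsorted]
    rcases r with _ | _ | r
    · rfl
    · rfl
    · simp [show r < n by omega]
  have hz_c : hz ((c : ℤ) - 1) = hfun (c - 1) := by
    rw [← hz_natCast, Nat.cast_sub hc, Nat.cast_one]
  rw [schur_eq_det_jacobiTrudi, hlength, hrows]
  rw [det_jacobiTrudi_succ_succ _ _ fun r hr =>
    (if_neg (by omega)).trans (if_neg (by omega))]
  simp +contextual only [↓reduceIte, Nat.add_one_ne_zero, Nat.reduceEqDiff, hz_c,
    det_jacobiTrudi_hook]
  rw [smul_sub, mul_smul_comm, mul_smul_comm]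

/-- Liu–Polo, second identity: for `k ≥ 2`,
`Σ_{λ ⊢ 2k-1, λ ⊴ (k-1,k-1,1)} m_λ = Σ_{i=0}^{k-2} (-1)^i s_{(k-1,k-1-i,1^{i+1})}`. -/
theorem liu_polo_two (k : ℕ) (hk : 2 ≤ k) :
    ∑ᶠ l ∈ {l : Partition | psize l = 2*k-1 ∧ Dominates (ofList [k-1, k-1, 1]) l}, msym l =
      ∑ i ∈ Finset.range (k-1),
        ((-1 : ℤ) ^ i) • schur (ofList ((k-1) :: (k-1-i) :: List.replicate (i+1) 1)) := by
  obtain ⟨b, rfl⟩ : ∃ b, k = b + 1 := ⟨k - 1, by omega⟩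
  simp only [Nat.add_sub_cancel, show 2 * (b + 1) - 1 = 2 * b + 1 by omega]
  have hdom : {l : Partition | psize l = 2 * b + 1 ∧ Dominates (ofList [b, b, 1]) l} =
      {l | psize l = 2 * b + 1 ∧ l.parts 0 ≤ b} :=
    Set.ext fun l => and_congr_right fun hl => dominates_ofList_iff (by omega) hl
  have hschur : ∀ i ∈ range b,
      (-1 : ℤ) ^ i • schur (ofList (b :: (b - i) :: List.replicate (i + 1) 1)) =
        hfun (b - (i + 1)) * hePartialSum (b + 1 + (i + 1)) (i + 1) -
          hfun b * hePartialSum (b + 1) (i + 1) := by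
    intro i hi
    have hi := mem_range.mp hi
    rw [schur_ofList_cons_cons_replicate (by omega) (by omega), smul_smul, ← pow_add,
      show b - i + (i + 1) = b + 1 by omega, show b - i - 1 = b - (i + 1) by omega,
      Odd.neg_one_pow ⟨i, by ring⟩, neg_one_smul, neg_sub]
  have hnewton := sum_range_hePartialSum (n := b + 1) (by omega)
  have hcauchy := sum_range_hfun_mul_hePartialSum (b + 1) b
  rw [sum_range_succ', hePartialSum_zero] at hnewton hcauchy
  rw [hdom, finsum_msym_parts_zero_le, G_eq_hfun_sub_psumF_mul_hfun (by omega) (by omega),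
    sum_congr rfl hschur, sum_sub_distrib, ← mul_sum]
  rw [eq_sub_of_add_eq hnewton, eq_sub_of_add_eq hcauchy, Nat.sub_zero, add_zero,
    show b + 1 + b = 2 * b + 1 by ring, show 2 * b + 1 - (b + 1) = b by omega]
  ring

end Petrie
end

section
/- Let k ≥ 2 and let λ, μ be partitions with μ ⊂ λ, λ_1 < k, and λ/μ a rim hook of size k whose diagram has b columns. With β_i = λᶜ_i - i for 1 ≤ i ≤ k-1 (padding λᶜ with zeros), there exists i ∈ {1,...,k-b} such that β(μᶜ) = (β_1,...,β_{i-1}, β_{i+1},...,β_{i+b-1}, β_i - k, β_{i+b},...,β_{k-1}). -/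
open scoped Classical

namespace Petrie

/-!
Rows and columns are `0`-indexed, as in `cells`. A rim hook `λ/μ` occupies an interval of rows
`r₁ ≤ r ≤ r₂`, and connectedness together with the absence of `2 × 2` squares forces consecutive
rows to overlap in exactly one column: `λ_{r+1} = μ_r + 1`. Hence it occupies the columns
`μ_{r₂} ≤ j < λ_{r₁}`, so `b = λ_{r₁} - μ_{r₂}` and `k = b + (r₂ - r₁)`. Columns outside this
range keep their length; inside it the overlap rule reads `λᶜ_{j+1} = μᶜ_j + 1`, which shifts `β`
one place to the left; and the last hook column of `μ` ends at row `r₁` while the first hook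
column of `λ` ends at row `r₂ + 1`, which produces the entry `β_i - k` for `i = μ_{r₂} + 1`.
Finally `λ_{r₁} ≤ λ_0 < k` gives `i ≤ k - b`.
-/

lemma conj_parts_le_iff (l : Partition) (j n : ℕ) :
    (conj l).parts j ≤ n ↔ l.parts n ≤ j := by
  obtain ⟨N, hN⟩ := l.fin_supp
  have hne : {m | l.parts m ≤ j}.Nonempty := ⟨N, by simp [hN N le_rfl]⟩
  exact ⟨fun h => (l.antitone h).trans (Nat.sInf_mem hne), fun h => Nat.sInf_le h⟩

lemma lt_conj_parts_iff (l : Partition) (j n : ℕ) :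
    n < (conj l).parts j ↔ j < l.parts n := by
  rw [← not_le, ← not_le, conj_parts_le_iff]

lemma parts_conj_parts_le (l : Partition) (j : ℕ) : l.parts ((conj l).parts j) ≤ j :=
  (conj_parts_le_iff l j _).1 le_rfl

lemma conj_parts_eq {l : Partition} {j m : ℕ} (h₁ : l.parts m ≤ j)
    (h₂ : ∀ n < m, j < l.parts n) : (conj l).parts j = m :=
  le_antisymm ((conj_parts_le_iff l j m).2 h₁) <| not_lt.1 fun h =>
    (h₂ _ h).not_ge (parts_conj_parts_le l j)

lemma conj_parts_eq_of_notMem_cells {la mu : Partition} (hle : ∀ i, mu.parts i ≤ la.parts i)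
    {j : ℕ} (hj : ∀ i, (i, j) ∉ cells la mu) : (conj mu).parts j = (conj la).parts j :=
  le_antisymm ((conj_parts_le_iff mu j _).2 ((hle _).trans (parts_conj_parts_le la j)))
    ((conj_parts_le_iff la j _).2 <| not_lt.1 fun hlt => hj _ ⟨parts_conj_parts_le mu j, hlt⟩)

lemma exists_mem_cells_succ_of_reachable {la mu : Partition} {r : ℕ} {c d : ℕ × ℕ}
    (h : Relation.ReflTransGen (fun a b => a ∈ cells la mu ∧ b ∈ cells la mu ∧ Adj a b) c d)
    (hc : c.1 ≤ r) (hd : r < d.1) : ∃ j, (r, j) ∈ cells la mu ∧ (r + 1, j) ∈ cells la mu := by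
  induction h with
  | refl => omega
  | @tail b d _ hbd ih =>
    by_cases hb : r < b.1
    · exact ih hb
    obtain ⟨hb', hd', hadj⟩ := hbd
    obtain ⟨b₁, b₂⟩ := b
    obtain ⟨d₁, d₂⟩ := d
    rcases hadj with ⟨h₁, -⟩ | ⟨h₂, h₁ | h₁⟩ <;> dsimp only at hb hd h₁
    · omega
    · obtain rfl : b₁ = r := by omega
      subst h₁ h₂
      exact ⟨b₂, hb', hd'⟩
    · omega

section RimHook

variable {la mu : Partition} {k : ℕ}

lemma IsRimHook.parts_succ_le (hrh : IsRimHook la mu k) (r : ℕ) :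
    la.parts (r + 1) ≤ mu.parts r + 1 := by
  obtain ⟨-, -, -, hsq⟩ := hrh
  have := la.antitone (Nat.le_add_right r 1)
  have := mu.antitone (Nat.le_add_right r 1)
  refine not_lt.1 fun hlt => hsq ⟨r, mu.parts r, ?_, ?_, ?_, ?_⟩ <;>
    refine ⟨?_, ?_⟩ <;> dsimp only <;> omega

/-- `λ/μ` occupies exactly the rows `r₁, …, r₂`, and consecutive rows overlap in one column. -/
structure IsRibbon (la mu : Partition) (r₁ r₂ : ℕ) : Prop where
  le : r₁ ≤ r₂
  eq_of_lt : ∀ r < r₁, mu.parts r = la.parts r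
  eq_of_gt : ∀ r, r₂ < r → mu.parts r = la.parts r
  last_lt : mu.parts r₂ < la.parts r₂
  interlace : ∀ r, r₁ ≤ r → r < r₂ → la.parts (r + 1) = mu.parts r + 1

lemma IsRimHook.exists_isRibbon (hrh : IsRimHook la mu k) (hk : 0 < k) :
    ∃ r₁ r₂, IsRibbon la mu r₁ r₂ := by
  have hsucc := hrh.parts_succ_le
  obtain ⟨hle, hsize, hconn, -⟩ := hrh
  set S := {r | mu.parts r < la.parts r}
  have hne : S.Nonempty := by
    obtain ⟨r, hr⟩ : ∃ r, la.parts r - mu.parts r ≠ 0 := by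
      by_contra! h
      simp only [h, finsum_zero] at hsize
      omega
    exact ⟨r, show mu.parts r < la.parts r by omega⟩
  have hbdd : BddAbove S := by
    obtain ⟨N, hN⟩ := la.fin_supp
    exact ⟨N, fun r (hr : mu.parts r < la.parts r) => not_lt.1 fun h => by
      have := hN r h.le
      omega⟩
  have hout : ∀ r ∉ S, mu.parts r = la.parts r := fun r hr => le_antisymm (hle r) (not_lt.1 hr)
  have h₁ : sInf S ∈ S := Nat.sInf_mem hne
  have h₂ : sSup S ∈ S := Nat.sSup_mem hne hbdd
  refine ⟨sInf S, sSup S, Nat.sInf_le h₂, fun r hr => hout r (Nat.notMem_of_lt_sInf hr),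
    fun r hr => hout r (notMem_of_csSup_lt hr hbdd), h₂,
    fun r hr₁ hr₂ => le_antisymm (hsucc r) ?_⟩
  obtain ⟨j, hj, hj'⟩ := exists_mem_cells_succ_of_reachable
    (hconn (sInf S, mu.parts (sInf S)) ⟨le_rfl, h₁⟩ (sSup S, mu.parts (sSup S)) ⟨le_rfl, h₂⟩)
    hr₁ hr₂
  exact hj.1.trans_lt hj'.2

end RimHook

namespace IsRibbon

variable {la mu : Partition} {r₁ r₂ : ℕ}

lemma lt_of_mem_Icc (h : IsRibbon la mu r₁ r₂) {r : ℕ} (hr₁ : r₁ ≤ r) (hr₂ : r ≤ r₂) :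
    mu.parts r < la.parts r := by
  rcases hr₂.lt_or_eq with hlt | rfl
  · have := h.interlace r hr₁ hlt
    have := la.antitone (Nat.le_add_right r 1)
    omega
  · exact h.last_lt

lemma parts_le (h : IsRibbon la mu r₁ r₂) (r : ℕ) : mu.parts r ≤ la.parts r := by
  by_cases hr₁ : r < r₁
  · exact (h.eq_of_lt r hr₁).le
  by_cases hr₂ : r₂ < r
  · exact (h.eq_of_gt r hr₂).le
  exact (h.lt_of_mem_Icc (by omega) (by omega)).le

lemma mem_Icc_of_lt (h : IsRibbon la mu r₁ r₂) {r : ℕ} (hr : mu.parts r < la.parts r) :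
    r₁ ≤ r ∧ r ≤ r₂ := by
  constructor
  · exact not_lt.1 fun hlt => hr.ne (h.eq_of_lt r hlt)
  · exact not_lt.1 fun hlt => hr.ne (h.eq_of_gt r hlt)

lemma parts_succ_le (h : IsRibbon la mu r₁ r₂) {r : ℕ} (hr : r₁ ≤ r) :
    la.parts (r + 1) ≤ mu.parts r + 1 := by
  rcases lt_or_ge r r₂ with hlt | hge
  · exact (h.interlace r hr hlt).le
  · rw [← h.eq_of_gt (r + 1) (by omega)]
    exact (mu.antitone (Nat.le_add_right r 1)).trans (Nat.le_add_right (mu.parts r) 1)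

lemma mem_Ico_of_mem_cells (h : IsRibbon la mu r₁ r₂) {i j : ℕ} (hc : (i, j) ∈ cells la mu) :
    j ∈ Set.Ico (mu.parts r₂) (la.parts r₁) := by
  obtain ⟨hi₁, hi₂⟩ := h.mem_Icc_of_lt (hc.1.trans_lt hc.2)
  exact ⟨(mu.antitone hi₂).trans hc.1, hc.2.trans_le (la.antitone hi₁)⟩

lemma le_conj_parts (h : IsRibbon la mu r₁ r₂) {j : ℕ} (hj : j < la.parts r₁) :
    r₁ ≤ (conj mu).parts j :=
  not_lt.1 fun hlt => by
    have := h.eq_of_lt _ hlt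
    have := la.antitone hlt.le
    have := parts_conj_parts_le mu j
    omega

/-- With `d = 0`: the cell `(μᶜ_j, j)` lies in `λ/μ`; with `d = 1`: so does `(μᶜ_j, j + 1)`,
unless row `r₁` ends at column `j`. -/
lemma lt_parts_conj_parts (h : IsRibbon la mu r₁ r₂) {j d : ℕ} (hj : mu.parts r₂ ≤ j)
    (hd : d ≤ 1) (hjd : j + d < la.parts r₁) : j + d < la.parts ((conj mu).parts j) := by
  have hm₁ := h.le_conj_parts (j := j) (by omega)
  have hm₂ : (conj mu).parts j ≤ r₂ := (conj_parts_le_iff mu j r₂).2 hj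
  rcases hm₁.lt_or_eq with hlt | heq
  · have hrow := h.interlace ((conj mu).parts j - 1) (by omega) (by omega)
    have hcol := (lt_conj_parts_iff mu j ((conj mu).parts j - 1)).1 (by omega)
    rw [Nat.sub_add_cancel (by omega)] at hrow
    omega
  · rwa [← heq]

lemma columns_eq (h : IsRibbon la mu r₁ r₂) :
    {j | ∃ i, (i, j) ∈ cells la mu} = Set.Ico (mu.parts r₂) (la.parts r₁) := by
  ext j
  refine ⟨fun ⟨i, hc⟩ => h.mem_Ico_of_mem_cells hc, fun hj => ⟨(conj mu).parts j, ?_⟩⟩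
  exact ⟨parts_conj_parts_le mu j, h.lt_parts_conj_parts hj.1 (d := 0) zero_le_one hj.2⟩

lemma cols_eq (h : IsRibbon la mu r₁ r₂) : cols la mu = la.parts r₁ - mu.parts r₂ := by
  rw [cols, h.columns_eq, ← Finset.coe_Ico, Set.ncard_coe_finset, Nat.card_Ico]

lemma sum_Icc_sub_add (h : IsRibbon la mu r₁ r₂) {m : ℕ} (hm₁ : r₁ ≤ m) (hm₂ : m ≤ r₂) :
    ∑ r ∈ Finset.Icc r₁ m, (la.parts r - mu.parts r) + mu.parts m = la.parts r₁ + (m - r₁) := by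
  induction m, hm₁ using Nat.le_induction with
  | base =>
    have := h.parts_le r₁
    rw [Finset.Icc_self, Finset.sum_singleton]
    omega
  | succ m hm ih =>
    have := ih (by omega)
    have := h.interlace m hm (by omega)
    have := h.parts_le (m + 1)
    rw [Finset.sum_Icc_succ_top (by omega)]
    omega

lemma finsum_sub (h : IsRibbon la mu r₁ r₂) :
    ∑ᶠ r, (la.parts r - mu.parts r) = la.parts r₁ - mu.parts r₂ + (r₂ - r₁) := by
  have hsupp : (Function.support fun r => la.parts r - mu.parts r) ⊆ ↑(Finset.Icc r₁ r₂) :=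
    fun r hr => by
      rw [Finset.coe_Icc]
      exact h.mem_Icc_of_lt (by simp only [Function.mem_support] at hr; omega)
  rw [finsum_eq_sum_of_support_subset _ hsupp]
  have := h.sum_Icc_sub_add h.le le_rfl
  have := h.lt_of_mem_Icc h.le le_rfl
  have := la.antitone h.le
  omega

lemma conj_parts_eq_of_notMem_Ico (h : IsRibbon la mu r₁ r₂) {j : ℕ}
    (hj : j ∉ Set.Ico (mu.parts r₂) (la.parts r₁)) : (conj mu).parts j = (conj la).parts j :=
  conj_parts_eq_of_notMem_cells h.parts_le fun _ hc => hj (h.mem_Ico_of_mem_cells hc)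

lemma conj_parts_succ (h : IsRibbon la mu r₁ r₂) {j : ℕ} (hj₁ : mu.parts r₂ ≤ j)
    (hj₂ : j + 1 < la.parts r₁) : (conj la).parts (j + 1) = (conj mu).parts j + 1 := by
  have hlt := h.lt_parts_conj_parts hj₁ le_rfl hj₂
  refine conj_parts_eq ?_ fun n hn => hlt.trans_le (la.antitone (Nat.le_of_lt_succ hn))
  exact (h.parts_succ_le (h.le_conj_parts (by omega))).trans
    (Nat.succ_le_succ (parts_conj_parts_le mu j))

lemma conj_parts_pred_parts_first (h : IsRibbon la mu r₁ r₂) :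
    (conj mu).parts (la.parts r₁ - 1) = r₁ := by
  have := h.lt_of_mem_Icc le_rfl h.le
  refine conj_parts_eq (by omega) fun n hn => ?_
  rw [h.eq_of_lt n hn]
  have := la.antitone hn.le
  omega

lemma conj_parts_parts_last (h : IsRibbon la mu r₁ r₂) :
    (conj la).parts (mu.parts r₂) = r₂ + 1 := by
  refine conj_parts_eq ?_ fun n hn => h.last_lt.trans_le (la.antitone (Nat.le_of_lt_succ hn))
  rw [← h.eq_of_gt (r₂ + 1) r₂.lt_succ_self]
  exact mu.antitone (Nat.le_add_right r₂ 1)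

end IsRibbon

theorem beta_after_rim_hook_removal_general (k : ℕ) (la mu : Partition)
    (h1 : la.parts 0 < k) (hrh : IsRimHook la mu k) :
    ∃ i : ℕ, 1 ≤ i ∧ i ≤ k - cols la mu ∧
      (∀ t, 1 ≤ t → t < i → betaSeq mu t = betaSeq la t) ∧
      (∀ t, i ≤ t → t + 2 ≤ i + cols la mu → betaSeq mu t = betaSeq la (t+1)) ∧
      betaSeq mu (i + cols la mu - 1) = betaSeq la i - (k : ℤ) ∧
      (∀ t, i + cols la mu ≤ t → t ≤ k - 1 → betaSeq mu t = betaSeq la t) := by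
  obtain ⟨r₁, r₂, h⟩ := hrh.exists_isRibbon (by omega)
  have hk : k = la.parts r₁ - mu.parts r₂ + (r₂ - r₁) := hrh.2.1.symm.trans h.finsum_sub
  have hb := h.cols_eq
  have hlast : mu.parts r₂ < la.parts r₁ := h.last_lt.trans_le (la.antitone h.le)
  have hfirst : la.parts r₁ ≤ la.parts 0 := la.antitone (Nat.zero_le r₁)
  refine ⟨mu.parts r₂ + 1, by omega, by omega, fun t _ ht => ?_, fun t ht₁ ht₂ => ?_, ?_,
    fun t ht _ => ?_⟩
  · rw [betaSeq, betaSeq, h.conj_parts_eq_of_notMem_Ico (by simp only [Set.mem_Ico]; omega)]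
  · have := h.conj_parts_succ (j := t - 1) (by omega) (by omega)
    rw [betaSeq, betaSeq, show t + 1 - 1 = t - 1 + 1 by omega, this]
    push_cast
    ring
  · rw [show mu.parts r₂ + 1 + cols la mu - 1 = la.parts r₁ by omega, betaSeq, betaSeq,
      Nat.add_sub_cancel, h.conj_parts_parts_last, h.conj_parts_pred_parts_first]
    push_cast
    omega
  · rw [betaSeq, betaSeq, h.conj_parts_eq_of_notMem_Ico (by simp only [Set.mem_Ico]; omega)]

/-- removing a rim hook `λ/μ` of size `k` with `b` columns from
`λ` (with `λ_1 < k`) acts on the `β`-sequence as indicated: for some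
`i ∈ {1,…,k-b}`, `β(μᶜ) = (β_1,…,β_{i-1},β_{i+1},…,β_{i+b-1},β_i-k,β_{i+b},…,β_{k-1})`. -/
theorem beta_after_rim_hook_removal (k : ℕ) (hk : 2 ≤ k) (la mu : Partition)
    (h1 : la.parts 0 < k) (hrh : IsRimHook la mu k) :
    ∃ i : ℕ, 1 ≤ i ∧ i ≤ k - cols la mu ∧
      (∀ t, 1 ≤ t → t < i → betaSeq mu t = betaSeq la t) ∧
      (∀ t, i ≤ t → t + 2 ≤ i + cols la mu → betaSeq mu t = betaSeq la (t+1)) ∧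
      betaSeq mu (i + cols la mu - 1) = betaSeq la i - (k : ℤ) ∧
      (∀ t, i + cols la mu ≤ t → t ≤ k - 1 → betaSeq mu t = betaSeq la t) :=
  beta_after_rim_hook_removal_general k la mu h1 hrh

end Petrie
end
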